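/- For i = 1,2 let A_i = {(x,y) ∈ ℝ² : |x| ≤ γ_i/2, |y − m_i x| ≤ δ/2} with 0 < δ ≤ γ₂ ≤ γ₁ and slopes |m_i| ≤ K for a fixed constant K, let α = |arctan m₁ − arctan m₂|, let β > 0, Q_i = A_i × (0,β) ⊂ ℝ³, ξ_i ∈ ℝ³, and let φ_i be measurable functions with 0 ≤ φ_i ≤ 1 and supp φ_i ⊂ ξ_i + Q_i. Then for every 1 ≤ s < ∞ there is a constant C depending only on K and s such that ∫_{ℝ³} |φ₁ ∗ φ₂|^s dx ≤ C · (βδ)^{s+1} γ₂^s γ₁ / (1 + (γ₂/δ) α)^{s−1}. -/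

import Mathlib

/-!
Pointwise, `(φ₁ ∗ φ₂)(x)` is at most the volume of `(ξ₁ + Q₁) ∩ (x - ξ₂ - Q₂)`, a prism of
height `β` over the intersection of two slanted strips of vertical width `δ`. That intersection
has area at most `γ₂ δ`, and at most `2 δ² / |m₁ - m₂| ≤ 2 δ² / α` because `arctan` is
1-Lipschitz; hence `‖φ₁ ∗ φ₂‖_∞ ≤ 3 β δ γ₂ / (1 + (γ₂/δ) α)`. Combined with
`‖φ₁ ∗ φ₂‖₁ ≤ ‖φ₁‖₁ ‖φ₂‖₁ ≤ |Q₁| |Q₂|` and `∫ |f|^s ≤ ‖f‖_∞^(s-1) ‖f‖₁`, this gives the bound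
with `C = 3^(s-1)`.
-/

open MeasureTheory Set
open scoped ENNReal

lemma Real.abs_arctan_sub_arctan_le (a b : ℝ) : |arctan a - arctan b| ≤ |a - b| := by
  have hlip : LipschitzWith 1 arctan := by
    refine lipschitzWith_of_nnnorm_deriv_le differentiable_arctan fun x => ?_
    rw [← NNReal.coe_le_coe, coe_nnnorm, Real.norm_eq_abs, deriv_arctan, NNReal.coe_one,
      abs_of_pos (by positivity), div_le_one (by positivity)]
    nlinarith [sq_nonneg x]
  simpa [Real.dist_eq] using hlip.dist_le_mul a b

lemma lintegral_enorm_le_measure_of_support_subset {α E : Type*} [MeasurableSpace α]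
    [NormedAddCommGroup E] {μ : Measure α} {f : α → E} {s : Set α} (hf : ∀ x, ‖f x‖ ≤ 1)
    (hs : Function.support f ⊆ s) :
    ∫⁻ x, ‖f x‖ₑ ∂μ ≤ μ s := by
  refine (lintegral_mono fun x => ?_).trans (lintegral_indicator_one_le s)
  by_cases hx : x ∈ s
  · rw [indicator_of_mem hx, Pi.one_apply, ← ofReal_norm]
    exact ENNReal.ofReal_le_one.2 (hf x)
  · simp [Function.notMem_support.1 (mt (@hs x) hx)]

lemma lintegral_ofReal_abs_rpow_le {α : Type*} [MeasurableSpace α] {μ : Measure α}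
    {F : α → ℝ} {P s : ℝ} (hs : 1 ≤ s) (hF : ∀ x, |F x| ≤ P) :
    ∫⁻ x, ENNReal.ofReal (|F x| ^ s) ∂μ ≤ ENNReal.ofReal (P ^ (s - 1)) * ∫⁻ x, ‖F x‖ₑ ∂μ := by
  rw [← lintegral_const_mul' _ _ ENNReal.ofReal_ne_top]
  refine lintegral_mono fun x => ?_
  have hP : 0 ≤ P := (abs_nonneg _).trans (hF x)
  rw [Real.enorm_eq_ofReal_abs, ← ENNReal.ofReal_mul (by positivity)]
  gcongr
  calc |F x| ^ s = |F x| ^ (s - 1) * |F x| := by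
        rw [← Real.rpow_add_one' (abs_nonneg _) (by linarith), sub_add_cancel]
    _ ≤ P ^ (s - 1) * |F x| := by gcongr; exact hF x

lemma lintegral_enorm_integral_mul_sub_le {G : Type*} [MeasurableSpace G] [AddGroup G]
    [MeasurableAdd G] [MeasurableSub₂ G] {μ : Measure G} [SFinite μ] [μ.IsAddRightInvariant]
    {f g : G → ℝ} (hf : Measurable f) (hg : Measurable g) :
    ∫⁻ x, ‖∫ y, f y * g (x - y) ∂μ‖ₑ ∂μ ≤ (∫⁻ y, ‖f y‖ₑ ∂μ) * ∫⁻ x, ‖g x‖ₑ ∂μ :=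
  calc ∫⁻ x, ‖∫ y, f y * g (x - y) ∂μ‖ₑ ∂μ
      ≤ ∫⁻ x, ∫⁻ y, ‖f y‖ₑ * ‖g (x - y)‖ₑ ∂μ ∂μ := by
        gcongr with x
        simpa only [enorm_mul] using enorm_integral_le_lintegral_enorm fun y => f y * g (x - y)
    _ = ∫⁻ y, ∫⁻ x, ‖f y‖ₑ * ‖g (x - y)‖ₑ ∂μ ∂μ :=
        lintegral_lintegral_swap (by fun_prop)
    _ = (∫⁻ y, ‖f y‖ₑ ∂μ) * ∫⁻ x, ‖g x‖ₑ ∂μ := by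
        simp_rw [lintegral_const_mul' _ _ enorm_ne_top,
          lintegral_sub_right_eq_self fun x => ‖g x‖ₑ]
        exact lintegral_mul_const _ hf.enorm

lemma volume_prod_Ioo {α : Type*} [MeasureSpace α] (T : Set α) (a β : ℝ) :
    volume (T ×ˢ Ioo a (a + β)) = volume T * ENNReal.ofReal β := by
  rw [Measure.volume_eq_prod, Measure.prod_prod, Real.volume_Ioo, add_sub_cancel_left]

lemma volume_setOf_abs_mul_sub_le {k : ℝ} (hk : k ≠ 0) (b δ : ℝ) :
    volume {t : ℝ | |k * t - b| ≤ δ} = ENNReal.ofReal (2 * δ / |k|) := by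
  have : {t : ℝ | |k * t - b| ≤ δ} = (k * ·) ⁻¹' Icc (b - δ) (b + δ) := by
    ext t
    simp only [mem_ofPred_eq, mem_preimage, mem_Icc, abs_le]
    constructor <;> rintro ⟨h₁, h₂⟩ <;> constructor <;> linarith
  rw [this, Real.volume_preimage_mul_left hk, Real.volume_Icc,
    ← ENNReal.ofReal_mul (abs_nonneg _), abs_inv]
  ring_nf

def slantedStrip (U : Set ℝ) (m a δ : ℝ) : Set (ℝ × ℝ) :=
  {p | p.1 ∈ U ∧ |p.2 - m * p.1 - a| ≤ δ / 2}

def parallelogram (γ m δ : ℝ) : Set (ℝ × ℝ) :=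
  {p | |p.1| ≤ γ / 2 ∧ |p.2 - m * p.1| ≤ δ / 2}

lemma measurableSet_slantedStrip {U : Set ℝ} (hU : MeasurableSet U) (m a δ : ℝ) :
    MeasurableSet (slantedStrip U m a δ) :=
  (measurable_fst hU).inter
    (measurableSet_le (f := fun p : ℝ × ℝ => |p.2 - m * p.1 - a|) (by fun_prop) measurable_const)

lemma volume_slantedStrip {U : Set ℝ} (hU : MeasurableSet U) (m a δ : ℝ) :
    volume (slantedStrip U m a δ) = volume U * ENNReal.ofReal δ := by
  have hfiber (u : ℝ) : volume (Prod.mk u ⁻¹' slantedStrip U m a δ) =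
      U.indicator (fun _ => ENNReal.ofReal δ) u := by
    by_cases hu : u ∈ U
    · have : Prod.mk u ⁻¹' slantedStrip U m a δ =
          Icc (m * u + a - δ / 2) (m * u + a + δ / 2) := by
        ext v
        simp only [slantedStrip, mem_preimage, mem_ofPred_eq, hu, true_and, abs_le, mem_Icc]
        constructor <;> rintro ⟨h₁, h₂⟩ <;> constructor <;> linarith
      rw [this, Real.volume_Icc, indicator_of_mem hu]
      ring_nf
    · simp [slantedStrip, hu]
  rw [Measure.volume_eq_prod, Measure.prod_apply (measurableSet_slantedStrip hU m a δ)]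
  simp_rw [hfiber]
  rw [lintegral_indicator hU, setLIntegral_const, mul_comm]

lemma slantedStrip_inter_subset (U₁ U₂ : Set ℝ) (m₁ m₂ a₁ a₂ δ : ℝ) :
    slantedStrip U₁ m₁ a₁ δ ∩ slantedStrip U₂ m₂ a₂ δ ⊆
      slantedStrip {t | |(m₁ - m₂) * t - (a₂ - a₁)| ≤ δ} m₁ a₁ δ := by
  rintro p ⟨⟨-, h₁⟩, -, h₂⟩
  refine ⟨?_, h₁⟩
  calc |(m₁ - m₂) * p.1 - (a₂ - a₁)| = |(p.2 - m₂ * p.1 - a₂) - (p.2 - m₁ * p.1 - a₁)| := by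
        ring_nf
    _ ≤ |p.2 - m₂ * p.1 - a₂| + |p.2 - m₁ * p.1 - a₁| := abs_sub _ _
    _ ≤ δ := by linarith

lemma abs_sub_mul_volume_real_slantedStrip_inter_le (U₁ U₂ : Set ℝ) (m₁ m₂ a₁ a₂ : ℝ) {δ : ℝ}
    (hδ : 0 ≤ δ) :
    |m₁ - m₂| * volume.real (slantedStrip U₁ m₁ a₁ δ ∩ slantedStrip U₂ m₂ a₂ δ) ≤ 2 * δ ^ 2 := by
  rcases eq_or_ne m₁ m₂ with rfl | hm
  · simp only [sub_self, abs_zero, zero_mul]; positivity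
  have hk : 0 < |m₁ - m₂| := abs_pos.2 (sub_ne_zero.2 hm)
  have hvol : volume (slantedStrip {t | |(m₁ - m₂) * t - (a₂ - a₁)| ≤ δ} m₁ a₁ δ) =
      ENNReal.ofReal (2 * δ / |m₁ - m₂| * δ) := by
    rw [volume_slantedStrip (measurableSet_le (by fun_prop) measurable_const),
      volume_setOf_abs_mul_sub_le (sub_ne_zero.2 hm), ← ENNReal.ofReal_mul (by positivity)]
  calc |m₁ - m₂| * volume.real (slantedStrip U₁ m₁ a₁ δ ∩ slantedStrip U₂ m₂ a₂ δ)
      ≤ |m₁ - m₂| * (2 * δ / |m₁ - m₂| * δ) := by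
        gcongr
        exact ENNReal.toReal_le_of_le_ofReal (by positivity)
          ((measure_mono (slantedStrip_inter_subset _ _ _ _ _ _ _)).trans_eq hvol)
    _ = 2 * δ ^ 2 := by field_simp

lemma neg_mem_parallelogram {γ m δ : ℝ} {p : ℝ × ℝ} (hp : p ∈ parallelogram γ m δ) :
    -p ∈ parallelogram γ m δ := by
  refine ⟨by simpa using hp.1, ?_⟩
  rw [Prod.fst_neg, Prod.snd_neg, show -p.2 - m * -p.1 = -(p.2 - m * p.1) by ring, abs_neg]
  exact hp.2

lemma add_mem_slantedStrip {γ m δ : ℝ} {p : ℝ × ℝ} (c : ℝ × ℝ) (hp : p ∈ parallelogram γ m δ) :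
    c + p ∈ slantedStrip (Icc (c.1 - γ / 2) (c.1 + γ / 2)) m (c.2 - m * c.1) δ := by
  obtain ⟨h₁, h₂⟩ := hp
  rw [abs_le] at h₁
  refine ⟨⟨?_, ?_⟩, ?_⟩
  · simp only [Prod.fst_add]; linarith
  · simp only [Prod.fst_add]; linarith
  · simpa only [Prod.fst_add, Prod.snd_add, show ∀ x y : ℝ,
      c.2 + y - m * (c.1 + x) - (c.2 - m * c.1) = y - m * x from fun _ _ => by ring] using h₂

lemma mem_slantedStrip_prod_Ioo_of_mem_image_add {γ m δ β : ℝ} {ξ y : (ℝ × ℝ) × ℝ}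
    (hy : y ∈ (ξ + ·) '' (parallelogram γ m δ ×ˢ Ioo 0 β)) :
    y ∈ slantedStrip (Icc (ξ.1.1 - γ / 2) (ξ.1.1 + γ / 2)) m (ξ.1.2 - m * ξ.1.1) δ ×ˢ
      Ioo ξ.2 (ξ.2 + β) := by
  obtain ⟨q, ⟨hq₁, hq₂⟩, rfl⟩ := hy
  refine ⟨add_mem_slantedStrip ξ.1 hq₁, ?_⟩
  simp only [Prod.snd_add, mem_Ioo] at hq₂ ⊢
  constructor <;> linarith [hq₂.1, hq₂.2]

lemma lintegral_enorm_le_of_support_subset_image_add {γ m δ β : ℝ} {ξ : (ℝ × ℝ) × ℝ}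
    {φ : (ℝ × ℝ) × ℝ → ℝ} (hδ : 0 ≤ δ) (hβ : 0 ≤ β) (hφ : ∀ x, |φ x| ≤ 1)
    (hs : Function.support φ ⊆ (ξ + ·) '' (parallelogram γ m δ ×ˢ Ioo 0 β)) :
    ∫⁻ x, ‖φ x‖ₑ ≤ ENNReal.ofReal (β * δ * γ) :=
  calc ∫⁻ x, ‖φ x‖ₑ
      ≤ volume (slantedStrip (Icc (ξ.1.1 - γ / 2) (ξ.1.1 + γ / 2)) m (ξ.1.2 - m * ξ.1.1) δ ×ˢ
          Ioo ξ.2 (ξ.2 + β)) :=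
        lintegral_enorm_le_measure_of_support_subset hφ fun _ hy =>
          mem_slantedStrip_prod_Ioo_of_mem_image_add (hs hy)
    _ = ENNReal.ofReal (β * δ * γ) := by
        rw [volume_prod_Ioo, volume_slantedStrip measurableSet_Icc, Real.volume_Icc,
          ← ENNReal.ofReal_mul' hδ, ← ENNReal.ofReal_mul' hβ]
        ring_nf

lemma abs_integral_mul_sub_le {δ γ₁ γ₂ m₁ m₂ β : ℝ} {ξ₁ ξ₂ : (ℝ × ℝ) × ℝ}
    {φ₁ φ₂ : (ℝ × ℝ) × ℝ → ℝ} (hδ : 0 < δ) (hγ₂ : 0 ≤ γ₂) (hβ : 0 ≤ β)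
    (hφ₁ : ∀ y, |φ₁ y| ≤ 1) (hφ₂ : ∀ y, |φ₂ y| ≤ 1)
    (hs₁ : Function.support φ₁ ⊆ (ξ₁ + ·) '' (parallelogram γ₁ m₁ δ ×ˢ Ioo 0 β))
    (hs₂ : Function.support φ₂ ⊆ (ξ₂ + ·) '' (parallelogram γ₂ m₂ δ ×ˢ Ioo 0 β))
    (x : (ℝ × ℝ) × ℝ) :
    |∫ y, φ₁ y * φ₂ (x - y)| ≤
      3 * (β * δ) * γ₂ / (1 + γ₂ / δ * |Real.arctan m₁ - Real.arctan m₂|) := by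
  set c := (x - ξ₂).1
  set T := slantedStrip (Icc (ξ₁.1.1 - γ₁ / 2) (ξ₁.1.1 + γ₁ / 2)) m₁ (ξ₁.1.2 - m₁ * ξ₁.1.1) δ ∩
    slantedStrip (Icc (c.1 - γ₂ / 2) (c.1 + γ₂ / 2)) m₂ (c.2 - m₂ * c.1) δ
  set α := |Real.arctan m₁ - Real.arctan m₂|
  have hsupp : Function.support (fun y => φ₁ y * φ₂ (x - y)) ⊆ T ×ˢ Ioo ξ₁.2 (ξ₁.2 + β) := by
    intro y hy
    obtain ⟨h₁, h₂⟩ := mul_ne_zero_iff.1 hy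
    obtain ⟨hy₁, hy₂⟩ := mem_slantedStrip_prod_Ioo_of_mem_image_add (hs₁ h₁)
    obtain ⟨q, ⟨hq, -⟩, hxy⟩ := hs₂ h₂
    have hyc : y.1 = c + -q.1 := by
      rw [show y = x - ξ₂ + -q by
        rw [← sub_eq_add_neg, sub_sub, show ξ₂ + q = x - y from hxy, sub_sub_cancel]]
      rfl
    exact ⟨⟨hy₁, hyc ▸ add_mem_slantedStrip c (neg_mem_parallelogram hq)⟩, hy₂⟩
  have hT : volume T ≤ ENNReal.ofReal (γ₂ * δ) := by
    refine (measure_mono inter_subset_right).trans_eq ?_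
    rw [volume_slantedStrip measurableSet_Icc, Real.volume_Icc,
      show c.1 + γ₂ / 2 - (c.1 - γ₂ / 2) = γ₂ by ring, ← ENNReal.ofReal_mul hγ₂]
  set V := volume.real T
  have hV : V ≤ γ₂ * δ := ENNReal.toReal_le_of_le_ofReal (by positivity) hT
  have hαV : α * V ≤ 2 * δ ^ 2 :=
    (mul_le_mul_of_nonneg_right (Real.abs_arctan_sub_arctan_le _ _) measureReal_nonneg).trans
      (abs_sub_mul_volume_real_slantedStrip_inter_le _ _ _ _ _ _ hδ.le)
  have hVD : V * (1 + γ₂ / δ * α) ≤ 3 * γ₂ * δ :=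
    calc V * (1 + γ₂ / δ * α) = V + γ₂ / δ * (α * V) := by ring
      _ ≤ γ₂ * δ + γ₂ / δ * (2 * δ ^ 2) := by gcongr
      _ = 3 * γ₂ * δ := by field_simp; ring
  rw [← ENNReal.ofReal_le_ofReal_iff (by positivity), ← Real.enorm_eq_ofReal_abs]
  calc ‖∫ y, φ₁ y * φ₂ (x - y)‖ₑ ≤ ∫⁻ y, ‖φ₁ y * φ₂ (x - y)‖ₑ := enorm_integral_le_lintegral_enorm _
    _ ≤ volume (T ×ˢ Ioo ξ₁.2 (ξ₁.2 + β)) :=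
        lintegral_enorm_le_measure_of_support_subset (fun y => by
          rw [norm_mul]; exact mul_le_one₀ (hφ₁ y) (norm_nonneg _) (hφ₂ _)) hsupp
    _ = ENNReal.ofReal (V * β) := by
        rw [volume_prod_Ioo, ENNReal.ofReal_mul measureReal_nonneg,
          ofReal_measureReal (hT.trans_lt ENNReal.ofReal_lt_top).ne]
    _ ≤ ENNReal.ofReal (3 * (β * δ) * γ₂ / (1 + γ₂ / δ * α)) := by
        gcongr
        rw [le_div_iff₀ (by positivity)]
        nlinarith

instance : (volume : Measure ((ℝ × ℝ) × ℝ)).IsAddRightInvariant := by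
  have : (volume : Measure (ℝ × ℝ)).IsAddRightInvariant := by
    rw [Measure.volume_eq_prod]; infer_instance
  rw [Measure.volume_eq_prod]; infer_instance

lemma div_rpow_sub_one_mul_eq {b g g₁ D s : ℝ} (hb : 0 < b) (hg : 0 < g) (hD : 0 < D) :
    (3 * b * g / D) ^ (s - 1) * (b * g₁ * (b * g)) =
      3 ^ (s - 1) * b ^ (s + 1) * g ^ s * g₁ / D ^ (s - 1) := by
  have hb' : b ^ (s + 1) = b ^ (s - 1) * b * b := by
    rw [← Real.rpow_add_one hb.ne', ← Real.rpow_add_one hb.ne']; ring_nf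
  have hg' : g ^ s = g ^ (s - 1) * g := by
    rw [← Real.rpow_add_one hg.ne']; ring_nf
  rw [Real.div_rpow (by positivity) hD.le, Real.mul_rpow (by positivity) hg.le,
    Real.mul_rpow (by norm_num) hb.le, hb', hg']
  ring

theorem statement14 (K s : ℝ) (hs : 1 ≤ s) :
    ∃ C > 0, ∀ δ γ₁ γ₂ m₁ m₂ β : ℝ, ∀ ξ₁ ξ₂ : (ℝ × ℝ) × ℝ,
      ∀ φ₁ φ₂ : (ℝ × ℝ) × ℝ → ℝ,
      0 < δ → δ ≤ γ₂ → γ₂ ≤ γ₁ → |m₁| ≤ K → |m₂| ≤ K → 0 < β →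
      Measurable φ₁ → Measurable φ₂ →
      (∀ x, 0 ≤ φ₁ x ∧ φ₁ x ≤ 1) → (∀ x, 0 ≤ φ₂ x ∧ φ₂ x ≤ 1) →
      Function.support φ₁ ⊆ (fun y => ξ₁ + y) ''
        (({p : ℝ × ℝ | |p.1| ≤ γ₁ / 2 ∧ |p.2 - m₁ * p.1| ≤ δ / 2}) ×ˢ Ioo (0 : ℝ) β) →
      Function.support φ₂ ⊆ (fun y => ξ₂ + y) ''
        (({p : ℝ × ℝ | |p.1| ≤ γ₂ / 2 ∧ |p.2 - m₂ * p.1| ≤ δ / 2}) ×ˢ Ioo (0 : ℝ) β) →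
      ∫⁻ x : (ℝ × ℝ) × ℝ, ENNReal.ofReal (|∫ y, φ₁ y * φ₂ (x - y)| ^ s) ≤
        ENNReal.ofReal
          (C * (β * δ) ^ (s + 1) * γ₂ ^ s * γ₁ /
            (1 + (γ₂ / δ) * |Real.arctan m₁ - Real.arctan m₂|) ^ (s - 1)) := by
  refine ⟨3 ^ (s - 1), by positivity, ?_⟩
  intro δ γ₁ γ₂ m₁ m₂ β ξ₁ ξ₂ φ₁ φ₂ hδ hδγ₂ hγ₂γ₁ _ _ hβ hφ₁m hφ₂m hφ₁ hφ₂ hs₁ hs₂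
  have hγ₂ : 0 < γ₂ := hδ.trans_le hδγ₂
  have hγ₁ : 0 < γ₁ := hγ₂.trans_le hγ₂γ₁
  have habs₁ (y) : |φ₁ y| ≤ 1 := abs_le.2 ⟨by linarith [(hφ₁ y).1], (hφ₁ y).2⟩
  have habs₂ (y) : |φ₂ y| ≤ 1 := abs_le.2 ⟨by linarith [(hφ₂ y).1], (hφ₂ y).2⟩
  have hL1 := (lintegral_enorm_integral_mul_sub_le hφ₁m hφ₂m).trans (mul_le_mul'
    (lintegral_enorm_le_of_support_subset_image_add hδ.le hβ.le habs₁ hs₁)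
    (lintegral_enorm_le_of_support_subset_image_add hδ.le hβ.le habs₂ hs₂))
  have hLinfty := abs_integral_mul_sub_le hδ hγ₂.le hβ.le habs₁ habs₂ hs₁ hs₂
  grw [lintegral_ofReal_abs_rpow_le hs hLinfty, hL1, ← ENNReal.ofReal_mul, ← ENNReal.ofReal_mul,
    div_rpow_sub_one_mul_eq (by positivity) hγ₂ (by positivity)]
  all_goals positivity
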